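/- Let X be a δ-hyperbolic fine graph, let a, x be vertices and suppose there is a vertex c with angle at c between a and x strictly greater than (1000δ)². Then with α = 2δ, the slice S_{a,x}(d(a,c)) of U_{2δ}[a,x] at distance d(a,c) from a is exactly the singleton {c}. -/

import Mathlib

/-- A graph: vertices, oriented edges, origin/terminus maps, and a
fixed-point-free edge-reversing involution. -/
structure MGraph where
  V : Type
  E : Type
  o : E → V
  t : E → V
  rev : E → E
  rev_o : ∀ e, o (rev e) = t e
  rev_t : ∀ e, t (rev e) = o e
  rev_rev : ∀ e, rev (rev e) = e
  rev_ne : ∀ e, rev e ≠ e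

namespace MGraph

variable (X : MGraph)

/-- A walk from `x` to `y` given by a list of consecutive edges. -/
def IsWalk : List X.E → X.V → X.V → Prop
  | [], x, y => x = y
  | e :: es, x, y => X.o e = x ∧ IsWalk es (X.t e) y

/-- The vertices visited by a walk starting at `x`. -/
def walkVerts : X.V → List X.E → List X.V
  | x, [] => [x]
  | x, e :: es => x :: walkVerts (X.t e) es

/-- The graph metric (length of each edge is 1), valued in `ℕ∞`. -/
noncomputable def dist (x y : X.V) : ℕ∞ :=
  sInf {n : ℕ∞ | ∃ es, X.IsWalk es x y ∧ (es.length : ℕ∞) = n}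

/-- The distance from `x` to `y` in the graph with the vertex `v` removed. -/
noncomputable def delDist (v x y : X.V) : ℕ∞ :=
  sInf {n : ℕ∞ | ∃ es, X.IsWalk es x y ∧ v ∉ X.walkVerts x es ∧ (es.length : ℕ∞) = n}

/-- The angle at `v = t e1 = o e2` between two edges `e1, e2`: the distance
from `o e1` to `t e2` in the graph with the vertex `t e1` removed. -/
noncomputable def angle (e1 e2 : X.E) : ℕ∞ :=
  X.delDist (X.t e1) (X.o e1) (X.t e2)

/-- A geodesic is a walk whose length realizes the distance. -/
def IsGeodesic (es : List X.E) (x y : X.V) : Prop :=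
  X.IsWalk es x y ∧ (es.length : ℕ∞) = X.dist x y

/-- `∠_c(x1,x2) > θ` : there are edges `e1, e2` with `t e1 = o e2 = c`, each
lying on a geodesic between `c` and `x_i`, making an angle `> θ` at `c`. -/
def AngleGT (c x1 x2 : X.V) (θ : ℕ∞) : Prop :=
  ∃ (e1 e2 : X.E) (es1 es2 : List X.E), X.t e1 = c ∧ X.o e2 = c ∧
    X.IsGeodesic (X.rev e1 :: es1) c x1 ∧ X.IsGeodesic (e2 :: es2) c x2 ∧
    θ < X.angle e1 e2

/-- All pairs of consecutive edges of a walk make an angle at most `θ`. -/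
def AngleBounded (θ : ℕ∞) : List X.E → Prop
  | [] => True
  | [_] => True
  | e :: e' :: es => X.angle e e' ≤ θ ∧ AngleBounded θ (e' :: es)

/-- `v` is a vertex of the cone of parameter `θ` around the oriented edge `e`:
it lies on a path starting at `o e` by the edge `e`, of length at most `θ`,
whose consecutive edges make angles at most `θ`. -/
def InConeV (θ : ℕ∞) (e : X.E) (v : X.V) : Prop :=
  ∃ (es : List X.E) (y : X.V), X.IsWalk (e :: es) (X.o e) y ∧
    ((e :: es).length : ℕ∞) ≤ θ ∧ X.AngleBounded θ (e :: es) ∧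
    v ∈ X.walkVerts (X.o e) (e :: es)

/-- `ε` is an edge of the cone of parameter `θ` around the oriented edge `e`. -/
def InConeE (θ : ℕ∞) (e ε : X.E) : Prop :=
  ∃ (es : List X.E) (y : X.V), X.IsWalk (e :: es) (X.o e) y ∧
    ((e :: es).length : ℕ∞) ≤ θ ∧ X.AngleBounded θ (e :: es) ∧
    (ε ∈ e :: es ∨ X.rev ε ∈ e :: es)

/-- A graph is fine if for each edge `e` and each `L`, only finitely many
edges arrive at `o e` making an angle at most `L` with `e`. -/
def Fine : Prop :=
  ∀ (e : X.E) (L : ℕ), {e' : X.E | X.t e' = X.o e ∧ X.angle e' e ≤ (L : ℕ∞)}.Finite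

/-- δ-hyperbolicity: geodesic triangles are δ-thin. -/
def Hyperbolic (δ : ℕ) : Prop :=
  ∀ (a b c : X.V) (p q r : List X.E),
    X.IsGeodesic p a b → X.IsGeodesic q b c → X.IsGeodesic r a c →
    ∀ v ∈ X.walkVerts a p, ∃ w, (w ∈ X.walkVerts b q ∨ w ∈ X.walkVerts a r) ∧
      X.dist v w ≤ (δ : ℕ∞)

/-- The four point inequality form of δ-hyperbolicity. -/
def FourPoint (δ : ℕ) : Prop :=
  ∀ a x y y' : X.V,
    X.dist a x + X.dist y y' ≤
      max (X.dist a y + X.dist y' x) (X.dist a y' + X.dist y x) + (δ : ℕ∞)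

/-- Connectedness. -/
def Connected : Prop := ∀ x y : X.V, ∃ es, X.IsWalk es x y

/-- `t` is on an `α`-geodesic between `x` and `a`. -/
def OnAlphaGeod (α : ℕ∞) (t x a : X.V) : Prop :=
  X.dist x t + X.dist t a ≤ X.dist x a + α

/-- The set `𝓔_{a,x}(ρ)` of edges at distance `ρ` from `a` lying on
geodesics between `a` and `x`. -/
def GeodEdgeAt (a x : X.V) (ρ : ℕ∞) (e : X.E) : Prop :=
  X.dist a (X.o e) = ρ ∧ ∃ es, (X.IsGeodesic es a x ∨ X.IsGeodesic es x a) ∧ e ∈ es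

/-- The set `U_α[a,x]` of points on `α`-conical-geodesics between `x` and `a`. -/
def ConicalSet (α : ℕ) (a x : X.V) : Set X.V :=
  {t | X.OnAlphaGeod (α : ℕ∞) t x a ∧ X.dist a t ≤ X.dist a x ∧
       ∀ e, X.GeodEdgeAt a x (X.dist a t) e → X.InConeV ((40 * α : ℕ) : ℕ∞) e t}

end MGraph

/-!
A large angle at `c` says that the first steps from `c` towards `a` and towards `x` are far
apart in the graph with `c` removed. By thinness of triangles, any two first steps towards the
same point are close there, so in fact every first step towards `a` is far from every first step
towards `x`: `c` separates `a` from `x`. A geodesic from `a` to `x` missing `c` would pass near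
`c` on both sides and yield a short walk around `c`, so every such geodesic goes through `c`.
A point `t ≠ c` of the slice is then `4δ`-close to `c`, hence reachable around `c` from a first
step towards `a`; and it lies in the `80δ`-cone of the edge leaving `c` towards `x`, whose paths
have bounded angles and can therefore be rerouted around `c` within length `(80δ)²`. Together
these join first steps towards `a` and `x` around `c`, contradicting separation. Conversely `c`
lies in `U`, because every geodesic from `a` to `x` passes through it.
-/

namespace MGraph

variable {X : MGraph} {a c t u u' v w x y z : X.V} {e : X.E} {es l₁ l₂ g g' γ : List X.E}
  {δ n : ℕ}

section Walks

@[simp] lemma isWalk_nil : X.IsWalk [] x y ↔ x = y := Iff.rfl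

@[simp] lemma isWalk_cons : X.IsWalk (e :: es) x y ↔ X.o e = x ∧ X.IsWalk es (X.t e) y :=
  Iff.rfl

@[simp] lemma walkVerts_nil : X.walkVerts x [] = [x] := rfl

@[simp] lemma walkVerts_cons : X.walkVerts x (e :: es) = x :: X.walkVerts (X.t e) es := rfl

lemma isWalk_append : X.IsWalk (l₁ ++ l₂) x z ↔ ∃ y, X.IsWalk l₁ x y ∧ X.IsWalk l₂ y z := by
  induction l₁ generalizing x with
  | nil => simp
  | cons e l ih => simp [ih, and_assoc]

lemma IsWalk.append (h₁ : X.IsWalk l₁ x y) (h₂ : X.IsWalk l₂ y z) : X.IsWalk (l₁ ++ l₂) x z :=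
  isWalk_append.2 ⟨y, h₁, h₂⟩

lemma IsWalk.unique (h : X.IsWalk es x y) (h' : X.IsWalk es x z) : y = z := by
  induction es generalizing x with
  | nil => exact h.symm.trans h'
  | cons e es ih => exact ih h.2 h'.2

lemma start_mem_walkVerts : x ∈ X.walkVerts x es := by
  cases es <;> simp

lemma IsWalk.end_mem_walkVerts (h : X.IsWalk es x y) : y ∈ X.walkVerts x es := by
  induction es generalizing x with
  | nil => simp [h.symm]
  | cons e es ih => exact List.mem_cons_of_mem _ (ih h.2)

lemma walkVerts_eq_cons_tail : X.walkVerts x es = x :: (X.walkVerts x es).tail := by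
  cases es <;> rfl

lemma IsWalk.walkVerts_append (h : X.IsWalk l₁ x y) :
    X.walkVerts x (l₁ ++ l₂) = X.walkVerts x l₁ ++ (X.walkVerts y l₂).tail := by
  induction l₁ generalizing x with
  | nil => cases h; exact walkVerts_eq_cons_tail
  | cons e l ih => simp [ih h.2]

lemma IsWalk.mem_walkVerts_append (h : X.IsWalk l₁ x y) :
    w ∈ X.walkVerts x (l₁ ++ l₂) ↔ w ∈ X.walkVerts x l₁ ∨ w ∈ X.walkVerts y l₂ := by
  rw [h.walkVerts_append, List.mem_append, walkVerts_eq_cons_tail (x := y) (es := l₂),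
    List.mem_cons]
  constructor
  · tauto
  · rintro (hw | rfl | hw)
    exacts [.inl hw, .inl h.end_mem_walkVerts, .inr hw]

lemma IsWalk.mem_walkVerts_iff (h : X.IsWalk es x z) :
    v ∈ X.walkVerts x es ↔ ∃ l₁ l₂, l₁ ++ l₂ = es ∧ X.IsWalk l₁ x v ∧ X.IsWalk l₂ v z := by
  refine ⟨fun hv => ?_, fun ⟨l₁, l₂, hes, h₁, _⟩ => ?_⟩
  · induction es generalizing x with
    | nil =>
      rw [walkVerts_nil, List.mem_singleton] at hv
      exact ⟨[], [], rfl, hv.symm, hv.trans h⟩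
    | cons e es ih =>
      rcases List.mem_cons.1 hv with rfl | hv
      · exact ⟨[], e :: es, rfl, rfl, h⟩
      · obtain ⟨l₁, l₂, rfl, h₁, h₂⟩ := ih h.2 hv
        exact ⟨e :: l₁, l₂, rfl, ⟨h.1, h₁⟩, h₂⟩
  · subst hes
    exact h₁.mem_walkVerts_append.2 (Or.inl h₁.end_mem_walkVerts)

lemma IsWalk.o_mem_walkVerts (h : X.IsWalk es x y) (he : e ∈ es) : X.o e ∈ X.walkVerts x es := by
  obtain ⟨l₁, l₂, rfl⟩ := List.append_of_mem he
  obtain ⟨v, h₁, h₂⟩ := isWalk_append.1 h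
  exact h.mem_walkVerts_iff.2 ⟨l₁, e :: l₂, rfl, h₂.1 ▸ h₁, isWalk_cons.2 ⟨rfl, h₂.2⟩⟩

variable (X) in
def reverseWalk (es : List X.E) : List X.E := (es.map X.rev).reverse

@[simp] lemma length_reverseWalk : (X.reverseWalk es).length = es.length := by
  simp [reverseWalk]

lemma IsWalk.reverseWalk (h : X.IsWalk es x y) : X.IsWalk (X.reverseWalk es) y x := by
  induction es generalizing x with
  | nil => exact h.symm
  | cons e es ih =>
    simpa [MGraph.reverseWalk] using (ih h.2).append (by simp [X.rev_o, X.rev_t, h.1])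

lemma IsWalk.walkVerts_reverseWalk (h : X.IsWalk es x y) :
    X.walkVerts y (X.reverseWalk es) = (X.walkVerts x es).reverse := by
  induction es generalizing x with
  | nil => simp [h.symm, MGraph.reverseWalk]
  | cons e es ih =>
    have hrev : X.reverseWalk (e :: es) = X.reverseWalk es ++ [X.rev e] := by
      simp [MGraph.reverseWalk]
    rw [hrev, h.2.reverseWalk.walkVerts_append, ih h.2]
    simp [X.rev_t, h.1]

end Walks

section Distance

lemma dist_le_length (h : X.IsWalk es x y) : X.dist x y ≤ es.length :=
  sInf_le ⟨es, h, rfl⟩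

lemma exists_isGeodesic (h : X.dist x y ≠ ⊤) : ∃ es, X.IsGeodesic es x y := by
  have hne : {n : ℕ∞ | ∃ es, X.IsWalk es x y ∧ (es.length : ℕ∞) = n}.Nonempty := by
    by_contra hemp
    exact h (by rw [MGraph.dist, Set.not_nonempty_iff_eq_empty.1 hemp, sInf_empty])
  obtain ⟨es, hw, hl⟩ := csInf_mem hne
  exact ⟨es, hw, hl⟩

@[simp] lemma dist_self (x : X.V) : X.dist x x = 0 :=
  nonpos_iff_eq_zero.1 (dist_le_length (es := []) rfl)

lemma dist_eq_zero : X.dist x y = 0 ↔ x = y := by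
  refine ⟨fun h => ?_, fun h => h ▸ dist_self x⟩
  obtain ⟨es, hw, hl⟩ := exists_isGeodesic (h ▸ ENat.zero_ne_top)
  rw [h, Nat.cast_eq_zero, List.length_eq_zero_iff] at hl
  subst hl
  exact hw

lemma dist_triangle (x y z : X.V) : X.dist x z ≤ X.dist x y + X.dist y z := by
  rcases eq_or_ne (X.dist x y) ⊤ with h₁ | h₁
  · simp [h₁]
  rcases eq_or_ne (X.dist y z) ⊤ with h₂ | h₂
  · simp [h₂]
  obtain ⟨l₁, hw₁, hl₁⟩ := exists_isGeodesic h₁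
  obtain ⟨l₂, hw₂, hl₂⟩ := exists_isGeodesic h₂
  calc X.dist x z ≤ (l₁ ++ l₂).length := dist_le_length (hw₁.append hw₂)
    _ = X.dist x y + X.dist y z := by rw [← hl₁, ← hl₂, List.length_append, Nat.cast_add]

lemma dist_comm (x y : X.V) : X.dist x y = X.dist y x := by
  suffices ∀ x y : X.V, X.dist x y ≤ X.dist y x from le_antisymm (this x y) (this y x)
  intro x y
  rcases eq_or_ne (X.dist y x) ⊤ with h | h
  · simp [h]
  obtain ⟨es, hw, hl⟩ := exists_isGeodesic h
  simpa [hl] using dist_le_length hw.reverseWalk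

end Distance

variable (X) in
def WalkAvoiding (c x y : X.V) (n : ℕ) : Prop :=
  ∃ es, X.IsWalk es x y ∧ c ∉ X.walkVerts x es ∧ es.length ≤ n

namespace WalkAvoiding

variable {m : ℕ}

lemma refl (hx : x ≠ c) : X.WalkAvoiding c x x 0 :=
  ⟨[], rfl, by simpa [eq_comm] using hx, le_rfl⟩

lemma mono (h : X.WalkAvoiding c x y m) (hmn : m ≤ n) : X.WalkAvoiding c x y n :=
  let ⟨es, hw, hc, hl⟩ := h
  ⟨es, hw, hc, hl.trans hmn⟩

lemma trans (h₁ : X.WalkAvoiding c x y m) (h₂ : X.WalkAvoiding c y z n) :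
    X.WalkAvoiding c x z (m + n) := by
  obtain ⟨l₁, hw₁, hc₁, hl₁⟩ := h₁
  obtain ⟨l₂, hw₂, hc₂, hl₂⟩ := h₂
  refine ⟨l₁ ++ l₂, hw₁.append hw₂, ?_, by simp; omega⟩
  rw [hw₁.mem_walkVerts_append]
  tauto

lemma symm (h : X.WalkAvoiding c x y n) : X.WalkAvoiding c y x n := by
  obtain ⟨es, hw, hc, hl⟩ := h
  exact ⟨X.reverseWalk es, hw.reverseWalk, by simpa [hw.walkVerts_reverseWalk] using hc,
    by simpa using hl⟩

lemma right_ne (h : X.WalkAvoiding c x y n) : y ≠ c := by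
  obtain ⟨es, hw, hc, -⟩ := h
  rintro rfl
  exact hc hw.end_mem_walkVerts

end WalkAvoiding

lemma delDist_le_iff : X.delDist c x y ≤ n ↔ X.WalkAvoiding c x y n := by
  constructor
  · intro h
    have hne : {n : ℕ∞ | ∃ es, X.IsWalk es x y ∧ c ∉ X.walkVerts x es ∧
        (es.length : ℕ∞) = n}.Nonempty := by
      by_contra hemp
      rw [MGraph.delDist, Set.not_nonempty_iff_eq_empty.1 hemp, sInf_empty] at h
      exact ENat.natCast_ne_top n (top_le_iff.1 h)
    obtain ⟨es, hw, hc, hl⟩ := csInf_mem hne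
    exact ⟨es, hw, hc, by exact_mod_cast hl.trans_le h⟩
  · rintro ⟨es, hw, hc, hl⟩
    calc X.delDist c x y ≤ es.length := sInf_le ⟨es, hw, hc, rfl⟩
      _ ≤ n := by exact_mod_cast hl

lemma walkAvoiding_of_dist_le (h : X.dist x y ≤ n) (hn : (n : ℕ∞) < X.dist c x) :
    X.WalkAvoiding c x y n := by
  obtain ⟨es, hw, hl⟩ := exists_isGeodesic (ne_top_of_le_ne_top (ENat.natCast_ne_top n) h)
  refine ⟨es, hw, fun hc => ?_, by exact_mod_cast hl.trans_le h⟩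
  obtain ⟨l₁, l₂, rfl, h₁, -⟩ := hw.mem_walkVerts_iff.1 hc
  have : X.dist x c ≤ n := (dist_le_length h₁).trans (le_trans (by simp) (hl.trans_le h))
  exact (hn.trans_le (dist_comm c x ▸ this)).false

section Geodesics

lemma IsGeodesic.dist_ne_top (h : X.IsGeodesic es x y) : X.dist x y ≠ ⊤ :=
  h.2 ▸ ENat.natCast_ne_top _

lemma IsGeodesic.of_append (h : X.IsGeodesic (l₁ ++ l₂) x z) (h₁ : X.IsWalk l₁ x y) :
    X.IsGeodesic l₁ x y ∧ X.IsGeodesic l₂ y z := by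
  obtain ⟨y', h₁', h₂⟩ := isWalk_append.1 h.1
  obtain rfl := h₁'.unique h₁
  have d₁ := dist_le_length h₁
  have d₂ := dist_le_length h₂
  have hsum : (l₁.length : ℕ∞) + l₂.length ≤ X.dist x y' + X.dist y' z := by
    calc (l₁.length : ℕ∞) + l₂.length = X.dist x z := by rw [← h.2]; simp
      _ ≤ _ := dist_triangle x y' z
  refine ⟨⟨h₁, le_antisymm ?_ d₁⟩, ⟨h₂, le_antisymm ?_ d₂⟩⟩
  · exact (ENat.add_le_add_iff_right (ENat.natCast_ne_top _)).1 (hsum.trans (add_le_add le_rfl d₂))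
  · exact (ENat.add_le_add_iff_left (ENat.natCast_ne_top _)).1 (hsum.trans (add_le_add d₁ le_rfl))

lemma IsGeodesic.of_cons (h : X.IsGeodesic (e :: es) x y) :
    X.IsGeodesic [e] x (X.t e) ∧ X.IsGeodesic es (X.t e) y :=
  h.of_append (l₁ := [e]) (l₂ := es) ⟨h.1.1, rfl⟩

lemma IsGeodesic.reverseWalk (h : X.IsGeodesic es x y) : X.IsGeodesic (X.reverseWalk es) y x :=
  ⟨h.1.reverseWalk, by rw [length_reverseWalk, h.2, dist_comm]⟩

lemma IsGeodesic.dist_add_dist (h : X.IsGeodesic es x y) (hv : v ∈ X.walkVerts x es) :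
    X.dist x v + X.dist v y = X.dist x y := by
  obtain ⟨l₁, l₂, rfl, h₁, -⟩ := h.1.mem_walkVerts_iff.1 hv
  obtain ⟨g₁, g₂⟩ := h.of_append h₁
  rw [← g₁.2, ← g₂.2, ← h.2, List.length_append, Nat.cast_add]

lemma IsGeodesic.exists_mem_dist_eq (h : X.IsGeodesic es x y)
    (hn : (n : ℕ∞) ≤ X.dist x y) : ∃ v ∈ X.walkVerts x es, X.dist x v = n := by
  have hn' : n ≤ es.length := by exact_mod_cast hn.trans_eq h.2.symm
  have hsplit : X.IsGeodesic (es.take n ++ es.drop n) x y := (List.take_append_drop n es).symm ▸ h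
  obtain ⟨v, h₁, h₂⟩ := isWalk_append.1 hsplit.1
  refine ⟨v, h.1.mem_walkVerts_iff.2 ⟨_, _, List.take_append_drop n es, h₁, h₂⟩, ?_⟩
  rw [← (hsplit.of_append h₁).1.2, List.length_take, min_eq_left hn']

lemma IsGeodesic.eq_of_dist_eq (h : X.IsGeodesic es x y) (hu : u ∈ X.walkVerts x es)
    (hv : v ∈ X.walkVerts x es) (huv : X.dist x u = X.dist x v) : u = v := by
  obtain ⟨p, q, hpq, hp, -⟩ := h.1.mem_walkVerts_iff.1 hu
  obtain ⟨p', q', hpq', hp', -⟩ := h.1.mem_walkVerts_iff.1 hv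
  have hlen : p.length = p'.length := by
    have := ((hpq ▸ h).of_append hp).1.2.trans (huv.trans ((hpq' ▸ h).of_append hp').1.2.symm)
    exact_mod_cast this
  obtain rfl := (List.append_inj (hpq.trans hpq'.symm) hlen).1
  exact hp.unique hp'

lemma IsGeodesic.exists_isGeodesic_of_mem (h : X.IsGeodesic es x y) (hu : u ∈ X.walkVerts x es)
    (hv : v ∈ X.walkVerts x es) :
    ∃ s, X.IsGeodesic s u v ∧ ∀ w ∈ X.walkVerts u s, w ∈ X.walkVerts x es := by
  obtain ⟨p, q, rfl, hp, hq⟩ := h.1.mem_walkVerts_iff.1 hu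
  obtain ⟨gp, gq⟩ := h.of_append hp
  rcases hp.mem_walkVerts_append.1 hv with hv | hv
  · obtain ⟨p₁, s, rfl, hp₁, hs⟩ := hp.mem_walkVerts_iff.1 hv
    refine ⟨X.reverseWalk s, (gp.of_append hp₁).2.reverseWalk, fun w hw => ?_⟩
    rw [hs.walkVerts_reverseWalk, List.mem_reverse] at hw
    exact hp.mem_walkVerts_append.2 (.inl (hp₁.mem_walkVerts_append.2 (.inr hw)))
  · obtain ⟨s, q₂, rfl, hs, -⟩ := hq.mem_walkVerts_iff.1 hv
    exact ⟨s, (gq.of_append hs).1,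
      fun w hw => hp.mem_walkVerts_append.2 (.inr (hs.mem_walkVerts_append.2 (.inl hw)))⟩

lemma IsGeodesic.walkAvoiding (h : X.IsGeodesic es x y) (hc : c ∉ X.walkVerts x es)
    (hu : u ∈ X.walkVerts x es) (hv : v ∈ X.walkVerts x es) (huv : X.dist u v ≤ n) :
    X.WalkAvoiding c u v n := by
  obtain ⟨s, hs, hsub⟩ := h.exists_isGeodesic_of_mem hu hv
  exact ⟨s, hs.1, fun hcs => hc (hsub c hcs), by exact_mod_cast hs.2.trans_le huv⟩

lemma IsGeodesic.start_not_mem (h : X.IsGeodesic (e :: es) x y) :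
    x ∉ X.walkVerts (X.t e) es := by
  intro hx
  obtain ⟨l₁, l₂, rfl, -, h₂⟩ := h.1.2.mem_walkVerts_iff.1 hx
  have : ((e :: (l₁ ++ l₂)).length : ℕ∞) ≤ l₂.length := h.2 ▸ dist_le_length h₂
  norm_cast at this
  simp at this

lemma IsGeodesic.walkAvoiding_of_ne (h : X.IsGeodesic es c y) (hu : u ∈ X.walkVerts c es)
    (hv : v ∈ X.walkVerts c es) (huc : u ≠ c) (hvc : v ≠ c) (huv : X.dist u v ≤ n) :
    X.WalkAvoiding c u v n := by
  cases es with
  | nil => exact absurd (List.mem_singleton.1 hu) huc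
  | cons f fs =>
    rw [walkVerts_cons, List.mem_cons] at hu hv
    exact h.of_cons.2.walkAvoiding h.start_not_mem (hu.resolve_left huc) (hv.resolve_left hvc) huv

end Geodesics

variable (X) in
def IsFirstStep (c y u : X.V) : Prop :=
  X.dist c u = 1 ∧ ∃ g, X.IsGeodesic g c y ∧ u ∈ X.walkVerts c g

namespace IsFirstStep

lemma ne (h : X.IsFirstStep c y u) : u ≠ c := by
  rintro rfl
  simpa using h.1

lemma ne_end (h : X.IsFirstStep c y u) : c ≠ y := by
  obtain ⟨hcu, g, hg, hu⟩ := h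
  rintro rfl
  simpa [hcu] using hg.dist_add_dist hu

lemma dist_ne_top (h : X.IsFirstStep c y u) : X.dist c y ≠ ⊤ :=
  let ⟨_, _, hg, _⟩ := h
  hg.dist_ne_top

end IsFirstStep

lemma IsGeodesic.isFirstStep (h : X.IsGeodesic (e :: es) x y) : X.IsFirstStep x y (X.t e) :=
  ⟨by simpa using h.of_cons.1.2.symm, e :: es, h, List.mem_cons_of_mem _ start_mem_walkVerts⟩

lemma IsGeodesic.exists_edge_of_mem (h : X.IsGeodesic es x y) (hc : c ∈ X.walkVerts x es)
    (hcy : c ≠ y) : ∃ f ∈ es, X.o f = c ∧ X.IsFirstStep c y (X.t f) := by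
  obtain ⟨p, q, rfl, hp, hq⟩ := h.1.mem_walkVerts_iff.1 hc
  cases q with
  | nil => exact absurd hq hcy
  | cons f fs =>
    exact ⟨f, List.mem_append_right _ List.mem_cons_self, hq.1, (h.of_append hp).2.isFirstStep⟩

section Hyperbolic

lemma walkAvoiding_of_close (hg : X.IsGeodesic g c y) (hg' : X.IsGeodesic g' c z)
    (hu : u ∈ X.walkVerts c g) (hcu : X.dist c u = 1)
    (hu' : u' ∈ X.walkVerts c g') (hcu' : X.dist c u' = 1)
    (hv : v ∈ X.walkVerts c g) (hw : w ∈ X.walkVerts c g') {r : ℕ} (hcv : X.dist c v = r)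
    (hvw : X.dist v w ≤ δ) (hδr : δ < r) : X.WalkAvoiding c u u' (2 * (r + δ + 1)) := by
  have huc : u ≠ c := by rintro rfl; simp at hcu
  have hu'c : u' ≠ c := by rintro rfl; simp at hcu'
  have hvc : v ≠ c := by
    rintro rfl
    rw [dist_self] at hcv
    norm_cast at hcv
    omega
  have hwc : w ≠ c := by
    rintro rfl
    have : (r : ℕ∞) ≤ δ := hcv ▸ dist_comm _ _ ▸ hvw
    exact absurd (by exact_mod_cast this) (not_le.2 hδr)
  have h₁ : X.WalkAvoiding c u v (r + 1) := hg.walkAvoiding_of_ne hu hv huc hvc <| by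
    calc X.dist u v ≤ X.dist u c + X.dist c v := dist_triangle u c v
      _ = (r + 1 : ℕ) := by rw [dist_comm, hcu, hcv]; push_cast; ring
  have h₂ : X.WalkAvoiding c v w δ := walkAvoiding_of_dist_le hvw (by rw [hcv]; exact_mod_cast hδr)
  have h₃ : X.WalkAvoiding c w u' (r + δ + 1) := hg'.walkAvoiding_of_ne hw hu' hwc hu'c <| by
    calc X.dist w u' ≤ X.dist w v + (X.dist v c + X.dist c u') :=
          (dist_triangle w v u').trans (add_le_add le_rfl (dist_triangle v c u'))
      _ ≤ δ + (r + 1) := by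
          rw [dist_comm w v, dist_comm v c, hcv, hcu']
          exact add_le_add hvw le_rfl
      _ = (r + δ + 1 : ℕ) := by push_cast; ring
  exact ((h₁.trans h₂).trans h₃).mono (by omega)

lemma Hyperbolic.exists_near_or_walkAvoiding (hδ : X.Hyperbolic δ) (hu : X.IsFirstStep c y u)
    (hu' : X.IsFirstStep c z u') (hγ : X.IsGeodesic γ y z) :
    (∃ m ∈ X.walkVerts y γ, X.dist c m ≤ (3 * δ + 1 : ℕ) ∧ X.WalkAvoiding c u m (3 * δ + 2)) ∨
      X.WalkAvoiding c u u' (6 * δ + 4) := by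
  obtain ⟨hcu, g, hg, hug⟩ := id hu
  obtain ⟨hcu', g', hg', hu'g'⟩ := hu'
  rcases le_or_gt (X.dist c y) (2 * δ + 1 : ℕ) with hy | hy
  · refine .inl ⟨y, start_mem_walkVerts, hy.trans (by gcongr; omega), ?_⟩
    refine hg.walkAvoiding_of_ne hug hg.1.end_mem_walkVerts hu.ne hu.ne_end.symm ?_
    calc X.dist u y ≤ X.dist u c + X.dist c y := dist_triangle u c y
      _ ≤ 1 + (2 * δ + 1 : ℕ) := by rw [dist_comm, hcu]; exact add_le_add le_rfl hy
      _ ≤ (3 * δ + 2 : ℕ) := by norm_cast; omega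
  obtain ⟨v, hv, hcv⟩ := hg.exists_mem_dist_eq hy.le
  obtain ⟨w, hw | hw, hvw⟩ := hδ c y z g γ g' hg hγ hg' v hv
  · have hvc : v ≠ c := by
      rintro rfl
      rw [dist_self] at hcv
      norm_cast at hcv
    refine .inl ⟨w, hw, ?_, ?_⟩
    · calc X.dist c w ≤ X.dist c v + X.dist v w := dist_triangle c v w
        _ ≤ (2 * δ + 1 : ℕ) + δ := add_le_add hcv.le hvw
        _ = (3 * δ + 1 : ℕ) := by push_cast; ring
    refine ((hg.walkAvoiding_of_ne hug hv hu.ne hvc (n := 2 * δ + 2) ?_).trans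
      (walkAvoiding_of_dist_le hvw (by rw [hcv]; exact_mod_cast (by omega)))).mono (by omega)
    calc X.dist u v ≤ X.dist u c + X.dist c v := dist_triangle u c v
      _ = (2 * δ + 2 : ℕ) := by rw [dist_comm, hcu, hcv]; push_cast; ring
  · exact .inr ((walkAvoiding_of_close hg hg' hug hcu hu'g' hcu' hv hw hcv hvw (by omega)).mono
      (by omega))

lemma Hyperbolic.walkAvoiding_of_isFirstStep (hδ : X.Hyperbolic δ) (hu : X.IsFirstStep c y u)
    (hu' : X.IsFirstStep c y u') : X.WalkAvoiding c u u' (6 * δ + 4) := by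
  have hy : X.IsGeodesic [] y y := ⟨rfl, by simp⟩
  obtain ⟨m, hm, -, hum⟩ | h := hδ.exists_near_or_walkAvoiding hu hu' hy
  · obtain ⟨m', hm', -, hum'⟩ | h := hδ.exists_near_or_walkAvoiding hu' hu hy
    · rw [walkVerts_nil, List.mem_singleton] at hm hm'
      subst hm hm'
      exact (hum.trans hum'.symm).mono (by omega)
    · exact h.symm
  · exact h

lemma Hyperbolic.dist_le_of_onAlphaGeod (hδ : X.Hyperbolic δ) (hγ : X.IsGeodesic γ a x)
    (hc : c ∈ X.walkVerts a γ) {α : ℕ} (ht : X.OnAlphaGeod α t x a)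
    (hdt : X.dist a t = X.dist a c) : X.dist c t ≤ (2 * δ + α : ℕ) := by
  have hac := hγ.dist_add_dist hc
  have hac_fin : X.dist a c ≠ ⊤ := ne_top_of_le_ne_top hγ.dist_ne_top (hac ▸ le_self_add)
  have hxt_fin : X.dist x t ≠ ⊤ := by
    refine ne_top_of_le_ne_top ?_ (le_self_add.trans ht)
    rw [dist_comm x a]
    exact WithTop.add_ne_top.2 ⟨hγ.dist_ne_top, ENat.natCast_ne_top α⟩
  obtain ⟨q, hq⟩ := exists_isGeodesic hxt_fin
  obtain ⟨τ, hτ⟩ := exists_isGeodesic (hdt ▸ hac_fin)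
  obtain ⟨w, hw | hw, hcw⟩ := hδ a x t γ q τ hγ hq hτ c hc
  · have hxwt := hq.dist_add_dist hw
    have hwt : X.dist w t ≤ (δ + α : ℕ) := by
      have hxw_fin : X.dist x w ≠ ⊤ := ne_top_of_le_ne_top hxt_fin (le_self_add.trans_eq hxwt)
      have hfin : X.dist x w + X.dist a c ≠ ⊤ := WithTop.add_ne_top.2 ⟨hxw_fin, hac_fin⟩
      refine (ENat.add_le_add_iff_left hfin).1 ?_
      calc X.dist x w + X.dist a c + X.dist w t = X.dist x t + X.dist t a := by
            rw [dist_comm t a, hdt, ← hxwt]; ring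
        _ ≤ X.dist x a + α := ht
        _ = X.dist a c + X.dist c x + α := by rw [dist_comm x a, hac]
        _ ≤ X.dist a c + (X.dist x w + X.dist c w) + α := by
            rw [add_comm (X.dist x w), dist_comm x w]
            gcongr
            exact dist_triangle c w x
        _ = X.dist x w + X.dist a c + (X.dist c w + α) := by ring
        _ ≤ X.dist x w + X.dist a c + (δ + α : ℕ) := by push_cast; gcongr
    calc X.dist c t ≤ X.dist c w + X.dist w t := dist_triangle c w t
      _ ≤ δ + (δ + α : ℕ) := add_le_add hcw hwt
      _ = (2 * δ + α : ℕ) := by push_cast; ring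
  · have hawt := hτ.dist_add_dist hw
    have hwt : X.dist w t ≤ δ := by
      refine (ENat.add_le_add_iff_left
        (ne_top_of_le_ne_top (hdt ▸ hac_fin) (hawt ▸ le_self_add))).1 ?_
      calc X.dist a w + X.dist w t = X.dist a c := hawt.trans hdt
        _ ≤ X.dist a w + X.dist w c := dist_triangle a w c
        _ ≤ X.dist a w + δ := add_le_add le_rfl (dist_comm w c ▸ hcw)
    calc X.dist c t ≤ X.dist c w + X.dist w t := dist_triangle c w t
      _ ≤ δ + δ := add_le_add hcw hwt
      _ ≤ (2 * δ + α : ℕ) := by norm_cast; omega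

lemma Hyperbolic.exists_mem_near_end (hδ : X.Hyperbolic δ) (hg : X.IsGeodesic g c a)
    {τ : List X.E} (hτ : X.IsGeodesic τ a t) (hdt : X.dist a t = X.dist a c) {R : ℕ}
    (hct : X.dist c t ≤ R) (hv : v ∈ X.walkVerts c g) (hcv : X.dist c v = (R + δ + 1 : ℕ)) :
    ∃ w ∈ X.walkVerts a τ, X.dist v w ≤ δ ∧ X.dist w t ≤ (R + 2 * δ + 1 : ℕ) := by
  obtain ⟨σ, hσ⟩ := exists_isGeodesic (ne_top_of_le_ne_top (ENat.natCast_ne_top R) hct)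
  obtain ⟨w, hw | hw, hvw⟩ := hδ c a t g τ σ hg hτ hσ v hv
  · refine ⟨w, hw, hvw, ?_⟩
    have hawt := hτ.dist_add_dist hw
    have haw_fin : X.dist a w ≠ ⊤ :=
      ne_top_of_le_ne_top (hdt ▸ dist_comm a c ▸ hg.dist_ne_top) (le_self_add.trans_eq hawt)
    refine (ENat.add_le_add_iff_left haw_fin).1 ?_
    calc X.dist a w + X.dist w t = X.dist a c := hawt.trans hdt
      _ = X.dist a v + X.dist c v := by
          rw [dist_comm a c, ← hg.dist_add_dist hv, dist_comm v a, add_comm]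
      _ ≤ X.dist a w + (X.dist v w + (R + δ + 1 : ℕ)) := by
          rw [hcv, dist_comm v w, ← add_assoc]
          gcongr
          exact dist_triangle a w v
      _ ≤ X.dist a w + (δ + (R + δ + 1 : ℕ)) := by gcongr
      _ = X.dist a w + (R + 2 * δ + 1 : ℕ) := by push_cast; ring
  · have hcw : X.dist c w ≤ R := (le_self_add.trans_eq (hσ.dist_add_dist hw)).trans hct
    have : X.dist c v ≤ (R + δ : ℕ) := by
      calc X.dist c v ≤ X.dist c w + X.dist w v := dist_triangle c w v
        _ ≤ R + δ := add_le_add hcw (dist_comm w v ▸ hvw)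
        _ = _ := by push_cast; ring
    rw [hcv] at this
    norm_cast at this
    omega

lemma Hyperbolic.walkAvoiding_of_dist_eq (hδ : X.Hyperbolic δ) (hu : X.IsFirstStep c a u)
    (hdt : X.dist a t = X.dist a c) {R : ℕ} (hct : X.dist c t ≤ R) (htc : t ≠ c) :
    X.WalkAvoiding c u t (2 * R + 4 * δ + 3) := by
  obtain ⟨hcu, g, hg, hug⟩ := id hu
  obtain ⟨τ, hτ⟩ := exists_isGeodesic (hdt ▸ dist_comm a c ▸ hg.dist_ne_top)
  have hcτ : c ∉ X.walkVerts a τ := fun hc =>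
    htc (hτ.eq_of_dist_eq hτ.1.end_mem_walkVerts hc hdt)
  have hdu : ∀ {v : X.V} {n : ℕ}, X.dist c v ≤ n → X.dist u v ≤ (n + 1 : ℕ) := fun hv => by
    calc X.dist u _ ≤ X.dist u c + X.dist c _ := dist_triangle _ _ _
      _ ≤ 1 + (_ : ℕ) := by rw [dist_comm, hcu]; exact add_le_add le_rfl hv
      _ = _ := by push_cast; ring
  rcases le_or_gt (X.dist a c) (R + δ + 1 : ℕ) with hA | hA
  · have hac : a ≠ c := by
      rintro rfl
      exact htc (dist_eq_zero.1 (hdt.trans (dist_self a))).symm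
    have h₁ := hg.walkAvoiding_of_ne hug hg.1.end_mem_walkVerts hu.ne hac (hdu (dist_comm c a ▸ hA))
    have h₂ := hτ.walkAvoiding hcτ start_mem_walkVerts hτ.1.end_mem_walkVerts (hdt ▸ hA)
    exact (h₁.trans h₂).mono (by omega)
  obtain ⟨v, hv, hcv⟩ := hg.exists_mem_dist_eq (dist_comm a c ▸ hA.le)
  obtain ⟨w, hw, hvw, hwt⟩ := hδ.exists_mem_near_end hg hτ hdt hct hv hcv
  have hvc : v ≠ c := by
    rintro rfl
    rw [dist_self] at hcv
    norm_cast at hcv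
  have h₁ := hg.walkAvoiding_of_ne hug hv hu.ne hvc (hdu hcv.le)
  have h₂ := walkAvoiding_of_dist_le hvw (by rw [hcv]; exact_mod_cast (by omega))
  have h₃ := hτ.walkAvoiding hcτ hw hτ.1.end_mem_walkVerts hwt
  exact ((h₁.trans h₂).trans h₃).mono (by omega)

end Hyperbolic

section Cones

lemma angleBounded_iff_isChain {θ : ℕ∞} :
    X.AngleBounded θ es ↔ es.IsChain (fun e f => X.angle e f ≤ θ) := by
  induction es with
  | nil => simp [AngleBounded]
  | cons e es ih =>
    cases es with
    | nil => simp [AngleBounded]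
    | cons f es => simp [AngleBounded, ih]

lemma walkAvoiding_edge (ho : X.o e ≠ c) (ht : X.t e ≠ c) :
    X.WalkAvoiding c (X.o e) (X.t e) 1 :=
  ⟨[e], ⟨rfl, rfl⟩, by simp [Ne.symm ho, Ne.symm ht], le_rfl⟩

lemma walkAvoiding_of_isChain {θ : ℕ} (hθ : 1 ≤ θ) :
    ∀ {es : List X.E} {y z : X.V}, X.IsWalk es y z →
      es.IsChain (fun e f => X.angle e f ≤ θ) → y ≠ c → z ≠ c →
      X.WalkAvoiding c y z (θ * es.length)
  | [], _, _, hw, _, hy, _ => hw ▸ (WalkAvoiding.refl hy).mono (Nat.zero_le _)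
  | [e], _, _, hw, _, hy, hz => by
    obtain ⟨rfl, rfl⟩ := hw
    exact (walkAvoiding_edge hy hz).mono (by simpa using hθ)
  | e :: f :: es, y, z, hw, hch, hy, hz => by
    obtain ⟨rfl, hw⟩ := hw
    rw [List.isChain_cons_cons] at hch
    by_cases hte : X.t e = c
    · -- the angle bound at `c` is a detour of length `θ` around `c` from `o e` to `t f`
      have h₁ : X.WalkAvoiding c (X.o e) (X.t f) θ := by
        rw [← delDist_le_iff, ← hte]
        exact hch.1
      have hes : es.IsChain (fun e f => X.angle e f ≤ θ) := hch.2.tail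
      have h₂ := walkAvoiding_of_isChain hθ hw.2 hes h₁.right_ne hz
      exact (h₁.trans h₂).mono (by simp only [List.length_cons]; nlinarith)
    · have h₂ := walkAvoiding_of_isChain hθ hw hch.2 hte hz
      exact ((walkAvoiding_edge hy hte).trans h₂).mono (by simp only [List.length_cons]; nlinarith)

lemma InConeV.walkAvoiding {θ : ℕ} (hθ : 1 ≤ θ) (h : X.InConeV θ e v) (hoe : X.o e = c)
    (hte : X.t e ≠ c) (hv : v ≠ c) : X.WalkAvoiding c (X.t e) v (θ * θ) := by
  obtain ⟨es, y, hw, hlen, hab, hmem⟩ := h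
  rw [walkVerts_cons, List.mem_cons, hoe] at hmem
  obtain ⟨l₁, l₂, rfl, h₁, -⟩ := hw.2.mem_walkVerts_iff.1 (hmem.resolve_left hv)
  have hch := (angleBounded_iff_isChain.1 hab).tail.prefix (List.prefix_append l₁ l₂)
  refine (walkAvoiding_of_isChain hθ h₁ hch hte hv).mono (Nat.mul_le_mul_left θ ?_)
  have : (e :: (l₁ ++ l₂)).length ≤ θ := by exact_mod_cast hlen
  simp only [List.length_cons, List.length_append] at this
  omega

end Cones

section Separation

variable (X) in
def Separates (n : ℕ) (c a x : X.V) : Prop :=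
  ∀ u u', X.IsFirstStep c a u → X.IsFirstStep c x u' → ¬ X.WalkAvoiding c u u' n

lemma AngleGT.exists_isFirstStep {Θ : ℕ∞} (h : X.AngleGT c a x Θ) :
    ∃ u u', X.IsFirstStep c a u ∧ X.IsFirstStep c x u' ∧ Θ < X.delDist c u u' := by
  obtain ⟨e₁, e₂, es₁, es₂, ht₁, -, hg₁, hg₂, hΘ⟩ := h
  refine ⟨X.o e₁, X.t e₂, X.rev_t e₁ ▸ hg₁.isFirstStep, hg₂.isFirstStep, ?_⟩
  rwa [MGraph.angle, ht₁] at hΘ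

lemma AngleGT.separates (hδ : X.Hyperbolic δ) {Θ : ℕ} (h : X.AngleGT c a x Θ)
    (hn : n + 12 * δ + 8 ≤ Θ) : X.Separates n c a x := by
  obtain ⟨u₁, u₂, hu₁, hu₂, hΘ⟩ := h.exists_isFirstStep
  intro u u' hu hu' huu'
  have hw := (hδ.walkAvoiding_of_isFirstStep hu₁ hu).trans
    (huu'.trans (hδ.walkAvoiding_of_isFirstStep hu' hu₂))
  exact (hΘ.trans_le (delDist_le_iff.2 (hw.mono (by omega)))).false

lemma Separates.mem_of_isGeodesic (hδ : X.Hyperbolic δ) (hsep : X.Separates n c a x)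
    (hn : 12 * δ + 6 ≤ n) (hu : X.IsFirstStep c a u) (hu' : X.IsFirstStep c x u')
    (hγ : X.IsGeodesic γ a x) : c ∈ X.walkVerts a γ := by
  by_contra hc
  obtain ⟨m, hm, hcm, hum⟩ | h := hδ.exists_near_or_walkAvoiding hu hu' hγ
  · obtain ⟨m', hm', hcm', hum'⟩ | h := hδ.exists_near_or_walkAvoiding hu' hu hγ.reverseWalk
    · rw [hγ.1.walkVerts_reverseWalk, List.mem_reverse] at hm'
      have hmm : X.WalkAvoiding c m m' (6 * δ + 2) := hγ.walkAvoiding hc hm hm' <| by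
        calc X.dist m m' ≤ X.dist m c + X.dist c m' := dist_triangle m c m'
          _ ≤ (3 * δ + 1 : ℕ) + (3 * δ + 1 : ℕ) := add_le_add (dist_comm m c ▸ hcm) hcm'
          _ = (6 * δ + 2 : ℕ) := by push_cast; ring
      exact hsep u u' hu hu' (((hum.trans hmm).trans hum'.symm).mono (by omega))
    · exact hsep u u' hu hu' (h.symm.mono (by omega))
  · exact hsep u u' hu hu' (h.mono (by omega))

end Separation

section ConicalSet

lemma origin_eq_of_geodEdgeAt (hall : ∀ γ, X.IsGeodesic γ a x → c ∈ X.walkVerts a γ)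
    (he : X.GeodEdgeAt a x (X.dist a c) e) : X.o e = c := by
  obtain ⟨hde, es, hes, hmem⟩ := he
  obtain ⟨γ, hγ, hoe⟩ : ∃ γ, X.IsGeodesic γ a x ∧ X.o e ∈ X.walkVerts a γ := by
    rcases hes with hes | hes
    · exact ⟨es, hes, hes.1.o_mem_walkVerts hmem⟩
    · refine ⟨_, hes.reverseWalk, ?_⟩
      rw [hes.1.walkVerts_reverseWalk, List.mem_reverse]
      exact hes.1.o_mem_walkVerts hmem
  exact hγ.eq_of_dist_eq hoe (hall γ hγ) hde

lemma mem_conicalSet_of_forall_mem {α : ℕ} (hα : 0 < α) (hγ : X.IsGeodesic γ a x)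
    (hall : ∀ γ, X.IsGeodesic γ a x → c ∈ X.walkVerts a γ) : c ∈ X.ConicalSet α a x := by
  have hsum := hγ.dist_add_dist (hall γ hγ)
  refine ⟨?_, le_self_add.trans_eq hsum, fun e he => ?_⟩
  · show X.dist x c + X.dist c a ≤ X.dist x a + α
    rw [dist_comm x c, dist_comm c a, dist_comm x a, ← hsum, add_comm]
    exact le_self_add
  · refine ⟨[], X.t e, ⟨rfl, rfl⟩, ?_, trivial, by simp [origin_eq_of_geodEdgeAt hall he]⟩
    exact_mod_cast (by omega : 1 ≤ 40 * α)

end ConicalSet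

end MGraph

theorem stmt_11_general (X : MGraph) (δ : ℕ) (hδpos : 0 < δ) (hδ : X.Hyperbolic δ)
    (a x c : X.V)
    (h : X.AngleGT c a x ((((1000 * δ) ^ 2 : ℕ)) : ℕ∞)) :
    {t | t ∈ X.ConicalSet (2 * δ) a x ∧ X.dist a t = X.dist a c} = {c} := by
  open MGraph in
  obtain ⟨u, u', hu, hu', -⟩ := h.exists_isFirstStep
  -- `7000δ²` covers both `12δ + 6` and the length `12δ + 3 + (80δ)²` of the final walk
  have hsep : X.Separates (7000 * δ ^ 2) c a x := h.separates hδ (by nlinarith)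
  have hall : ∀ γ, X.IsGeodesic γ a x → c ∈ X.walkVerts a γ :=
    fun _ => hsep.mem_of_isGeodesic hδ (by nlinarith) hu hu'
  obtain ⟨γ, hγ⟩ : ∃ γ, X.IsGeodesic γ a x := exists_isGeodesic <| ne_top_of_le_ne_top
    (WithTop.add_ne_top.2 ⟨dist_comm c a ▸ hu.dist_ne_top, hu'.dist_ne_top⟩) (dist_triangle a c x)
  ext t
  constructor
  · rintro ⟨⟨hon, -, hcone⟩, hdt⟩
    by_contra htc
    obtain ⟨f, hf, hof, hfx⟩ := hγ.exists_edge_of_mem (hall γ hγ) hu'.ne_end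
    have hct := hδ.dist_le_of_onAlphaGeod hγ (hall γ hγ) hon hdt
    have hut := hδ.walkAvoiding_of_dist_eq hu hdt hct htc
    have hft := (hcone f ⟨by rw [hof, hdt], γ, .inl hγ, hf⟩).walkAvoiding (by omega) hof hfx.ne htc
    exact hsep u (X.t f) hu hfx ((hut.trans hft.symm).mono (by nlinarith))
  · rintro rfl
    exact ⟨mem_conicalSet_of_forall_mem (by omega) hγ hall, rfl⟩

/-- if `∠_c(a,x) > (1000δ)²`, then the slice of `U_{2δ}[a,x]` at
distance `d(a,c)` from `a` is exactly the singleton `{c}`. -/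
theorem stmt_11 (X : MGraph) (δ : ℕ) (hδpos : 0 < δ) (hδ : X.Hyperbolic δ)
    (hfine : X.Fine) (a x c : X.V)
    (h : X.AngleGT c a x ((((1000 * δ) ^ 2 : ℕ)) : ℕ∞)) :
    {t | t ∈ X.ConicalSet (2 * δ) a x ∧ X.dist a t = X.dist a c} = {c} :=
  stmt_11_general X δ hδpos hδ a x c h
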